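/- Let 𝓗 be a reduced collection of pairwise distinct sets in which the 2×3 matrix with rows 000 and 111 can be found, i.e. there exist sets H, H' in 𝓗 and three distinct elements e₁, e₂, e₃ of ⋃𝓗 such that {e₁,e₂,e₃} ∩ H = ∅ and {e₁,e₂,e₃} ⊆ H'. Then at least one of the 3-singleton matrix S³, the 3-cosingleton matrix S̄³, and the 3-monotone matrix M³ can be found in 𝓗. -/

import Mathlib

/-- A 0-1 matrix `N` (given as a `Prop`-valued matrix, `N i j` meaning entry 1)
with rows indexed by `Fin a` and columns by `Fin b` *can be found* in a collection
of sets `𝓗` if there are `a` distinct sets of `𝓗` and `b` distinct elements of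
`⋃₀ 𝓗` such that `N` is the incidence matrix of the sets over the elements. -/
def FoundIn {α : Type*} {a b : ℕ} (N : Fin a → Fin b → Prop) (𝓗 : Set (Set α)) : Prop :=
  ∃ (H : Fin a → Set α) (e : Fin b → α),
    Function.Injective H ∧ Function.Injective e ∧
    (∀ i, H i ∈ 𝓗) ∧ (∀ j, e j ∈ ⋃₀ 𝓗) ∧
    (∀ i j, e j ∈ H i ↔ N i j)

/-- The `n`-singleton matrix `Sⁿ`: `n+1` rows, `n` columns, entry 1 iff `i = j+1`. -/
def singletonMatrix (n : ℕ) : Fin (n + 1) → Fin n → Prop :=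
  fun i j => (i : ℕ) = (j : ℕ) + 1

/-- The `n`-cosingleton matrix `S̄ⁿ`: `n+1` rows, `n` columns, entry 0 iff `i = j`. -/
def cosingletonMatrix (n : ℕ) : Fin (n + 1) → Fin n → Prop :=
  fun i j => (i : ℕ) ≠ (j : ℕ)

/-- The `n`-monotone matrix `Mⁿ`: `n+1` rows, `n` columns, entry 1 iff `i ≥ j+1`. -/
def monotoneMatrix (n : ℕ) : Fin (n + 1) → Fin n → Prop :=
  fun i j => (j : ℕ) + 1 ≤ (i : ℕ)

/-- A collection of sets is *reduced* if every element of the union is useful to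
make the sets distinct: for every `x ∈ ⋃₀ 𝓗` there are two distinct sets `A ≠ B`
of `𝓗` with `A \ {x} = B \ {x}`. -/
def Reduced {α : Type*} (𝓗 : Set (Set α)) : Prop :=
  ∀ x ∈ ⋃₀ 𝓗, ∃ A ∈ 𝓗, ∃ B ∈ 𝓗, A ≠ B ∧ A \ {x} = B \ {x}

/-!
Pass to traces on the three given elements `e`: `T ↦ e ⁻¹' T` turns `𝓗` into a family `𝓣` of
subsets of `Fin 3` containing `∅` and `univ`, and a matrix found in `𝓣` is found in `𝓗`.
Reducedness gives for each `j` a set `s j ∌ j` with `s j, insert j (s j) ∈ 𝓣`. If some `s j` is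
a singleton `{x}`, or some `s j = ∅` while some `s k = {k}ᶜ`, then `𝓣` contains a maximal chain
`∅ ⊂ {x} ⊂ {x, y} ⊂ univ`, which is `M³`. Otherwise either every `s j` is empty and the sets
`{j} = insert j (s j)` give `S³`, or every `s j = {j}ᶜ` and these give `S̄³`.
-/

open Function Set

section FoundIn

variable {α β : Type*} {a b : ℕ} {N : Fin a → Fin b → Prop}

theorem FoundIn.of_preimage_image {𝓗 : Set (Set α)} {e : β → α} (he : Injective e)
    (he𝓗 : ∀ x, e x ∈ ⋃₀ 𝓗) (hN : FoundIn N (preimage e '' 𝓗)) : FoundIn N 𝓗 := by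
  obtain ⟨T, f, hT, hf, hT𝓗, -, hinc⟩ := hN
  choose H hH hHT using hT𝓗
  refine ⟨H, e ∘ f, fun i i' h => hT ?_, he.comp hf, hH, fun j => he𝓗 (f j), fun i j => ?_⟩
  · rw [← hHT, ← hHT, h]
  · rw [← hinc, ← hHT]
    rfl

theorem foundIn_of_rows_mem {𝓣 : Set (Set (Fin b))} (hN : Injective N)
    (hN𝓣 : ∀ i, {j | N i j} ∈ 𝓣) (hcover : ∀ j, ∃ i, N i j) : FoundIn N 𝓣 :=
  ⟨N, id, hN, injective_id, hN𝓣, fun j => let ⟨i, hi⟩ := hcover j; mem_sUnion_of_mem hi (hN𝓣 i),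
    fun _ _ => Iff.rfl⟩

end FoundIn

section Reduced

variable {α β : Type*} {𝓗 : Set (Set α)}

theorem Reduced.exists_insert_mem (hred : Reduced 𝓗) {x : α} (hx : x ∈ ⋃₀ 𝓗) :
    ∃ S ∈ 𝓗, x ∉ S ∧ insert x S ∈ 𝓗 := by
  obtain ⟨A, hA, B, hB, hAB, hdiff⟩ := hred x hx
  by_cases hxA : x ∈ A <;> by_cases hxB : x ∈ B
  · refine absurd ?_ hAB
    rw [← insert_sdiff_self_of_mem hxA, hdiff, insert_sdiff_self_of_mem hxB]
  · refine ⟨B, hB, hxB, ?_⟩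
    rwa [← sdiff_singleton_eq_self hxB, ← hdiff, insert_sdiff_singleton, insert_eq_of_mem hxA]
  · refine ⟨A, hA, hxA, ?_⟩
    rwa [← sdiff_singleton_eq_self hxA, hdiff, insert_sdiff_singleton, insert_eq_of_mem hxB]
  · refine absurd ?_ hAB
    rw [← sdiff_singleton_eq_self hxA, hdiff, sdiff_singleton_eq_self hxB]

theorem Reduced.exists_insert_mem_preimage_image (hred : Reduced 𝓗) {e : β → α}
    (he : Injective e) {j : β} (hj : e j ∈ ⋃₀ 𝓗) :
    ∃ s ∈ preimage e '' 𝓗, j ∉ s ∧ insert j s ∈ preimage e '' 𝓗 := by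
  obtain ⟨S, hS, hjS, hS'⟩ := hred.exists_insert_mem hj
  refine ⟨e ⁻¹' S, mem_image_of_mem _ hS, hjS, insert (e j) S, hS', ?_⟩
  ext k
  simp [he.eq_iff]

end Reduced

section Matrices

variable {n : ℕ}

theorem setOf_singletonMatrix_zero : {j | singletonMatrix n 0 j} = ∅ := by
  ext j
  simp [singletonMatrix]

theorem setOf_singletonMatrix_succ (j : Fin n) : {k | singletonMatrix n j.succ k} = {j} := by
  ext k
  simp [singletonMatrix, eq_comm, Fin.ext_iff]

theorem setOf_cosingletonMatrix_castSucc (j : Fin n) :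
    {k | cosingletonMatrix n j.castSucc k} = {j}ᶜ := by
  ext k
  simp [cosingletonMatrix, eq_comm, Fin.ext_iff]

theorem setOf_cosingletonMatrix_last : {k | cosingletonMatrix n (Fin.last n) k} = univ := by
  ext k
  simp [cosingletonMatrix, k.isLt.ne']

theorem singletonMatrix_injective : Injective (singletonMatrix n) := by
  intro i i' h
  replace h : {k | singletonMatrix n i k} = {k | singletonMatrix n i' k} := by rw [h]
  induction i using Fin.cases <;> induction i' using Fin.cases <;>
    simp_all [setOf_singletonMatrix_zero, setOf_singletonMatrix_succ]

theorem cosingletonMatrix_injective : Injective (cosingletonMatrix n) := by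
  intro i i' h
  replace h : {k | cosingletonMatrix n i k} = {k | cosingletonMatrix n i' k} := by rw [h]
  induction i using Fin.lastCases <;> induction i' using Fin.lastCases <;>
    simp_all [setOf_cosingletonMatrix_castSucc, setOf_cosingletonMatrix_last,
      eq_comm (a := univ)]

theorem monotoneMatrix_injective : Injective (monotoneMatrix n) := by
  have hne : ∀ i i' : Fin (n + 1), i < i' → monotoneMatrix n i ≠ monotoneMatrix n i' := by
    intro i i' hlt h
    have hi := congrFun h ⟨i, by omega⟩
    simp only [monotoneMatrix, eq_iff_iff] at hi
    omega
  intro i i' h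
  rcases lt_trichotomy i i' with hlt | rfl | hgt
  · exact absurd h (hne _ _ hlt)
  · rfl
  · exact absurd h.symm (hne _ _ hgt)

theorem foundIn_singletonMatrix {𝓣 : Set (Set (Fin n))} (hempty : ∅ ∈ 𝓣)
    (hsingleton : ∀ j, {j} ∈ 𝓣) : FoundIn (singletonMatrix n) 𝓣 := by
  refine foundIn_of_rows_mem singletonMatrix_injective (fun i => ?_)
    fun j => ⟨j.succ, by simp [singletonMatrix]⟩
  induction i using Fin.cases with
  | zero => rwa [setOf_singletonMatrix_zero]
  | succ j => rw [setOf_singletonMatrix_succ]; exact hsingleton j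

theorem foundIn_cosingletonMatrix {𝓣 : Set (Set (Fin n))} (huniv : univ ∈ 𝓣)
    (hcompl : ∀ j, {j}ᶜ ∈ 𝓣) : FoundIn (cosingletonMatrix n) 𝓣 := by
  refine foundIn_of_rows_mem cosingletonMatrix_injective (fun i => ?_)
    fun j => ⟨Fin.last n, by simp [cosingletonMatrix, j.isLt.ne']⟩
  induction i using Fin.lastCases with
  | last => rwa [setOf_cosingletonMatrix_last]
  | cast j => rw [setOf_cosingletonMatrix_castSucc]; exact hcompl j

end Matrices

section FinThree

theorem Fin.exists_ne_and_ne (x y : Fin 3) : ∃ z, z ≠ x ∧ z ≠ y := by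
  revert x y
  decide

theorem Fin.pair_eq_compl_singleton {x y z : Fin 3} (hxy : x ≠ y) (hxz : x ≠ z) (hyz : y ≠ z) :
    ({x, y} : Set (Fin 3)) = {z}ᶜ := by
  ext w
  simp only [mem_insert_iff, mem_singleton_iff, mem_compl_iff, Fin.ext_iff] at *
  omega

theorem Fin.eq_empty_or_singleton_or_eq_compl {j : Fin 3} {s : Set (Fin 3)} (hj : j ∉ s) :
    s = ∅ ∨ (∃ x, s = {x}) ∨ s = {j}ᶜ := by
  obtain ⟨x, hxj, y, hyj, hxy⟩ : ∃ x ≠ j, ∃ y ≠ j, x ≠ y :=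
    (by decide : ∀ j : Fin 3, ∃ x ≠ j, ∃ y ≠ j, x ≠ y) j
  have hs : s ⊆ {x, y} := by
    rw [Fin.pair_eq_compl_singleton hxy hxj hyj]
    exact subset_compl_singleton_iff.mpr hj
  rw [← Fin.pair_eq_compl_singleton hxy hxj hyj]
  rcases subset_pair_iff_eq.mp hs with h | h | h | h
  · exact .inl h
  · exact .inr (.inl ⟨x, h⟩)
  · exact .inr (.inl ⟨y, h⟩)
  · exact .inr (.inr h)

variable {𝓣 : Set (Set (Fin 3))}

theorem foundIn_monotoneMatrix_of_chain (hempty : ∅ ∈ 𝓣) (huniv : univ ∈ 𝓣) {x y : Fin 3}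
    (hxy : x ≠ y) (hx : {x} ∈ 𝓣) (hpair : {x, y} ∈ 𝓣) : FoundIn (monotoneMatrix 3) 𝓣 := by
  obtain ⟨z, hzx, hzy⟩ := Fin.exists_ne_and_ne x y
  have hf : Injective ![x, y, z] := by
    intro i j h
    fin_cases i <;> fin_cases j <;> simp_all [eq_comm]
  refine FoundIn.of_preimage_image hf (fun _ => mem_sUnion_of_mem (mem_univ _) huniv) ?_
  refine foundIn_of_rows_mem monotoneMatrix_injective (fun i => ?_)
    fun j => ⟨3, by simp [monotoneMatrix]⟩
  fin_cases i
  · exact ⟨∅, hempty, by ext j; simp [monotoneMatrix]⟩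
  · exact ⟨{x}, hx, by ext j; fin_cases j <;> simp [monotoneMatrix, hxy.symm, hzx]⟩
  · exact ⟨{x, y}, hpair, by ext j; fin_cases j <;> simp [monotoneMatrix, hzx, hzy]⟩
  · exact ⟨univ, huniv, by ext j; simp [monotoneMatrix]⟩

theorem foundIn_fin_three_of_exists_insert_mem (hempty : ∅ ∈ 𝓣) (huniv : univ ∈ 𝓣)
    (hins : ∀ j, ∃ s ∈ 𝓣, j ∉ s ∧ insert j s ∈ 𝓣) :
    FoundIn (singletonMatrix 3) 𝓣 ∨ FoundIn (cosingletonMatrix 3) 𝓣 ∨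
      FoundIn (monotoneMatrix 3) 𝓣 := by
  choose s hs hjs hins using hins
  by_cases hsingle : ∀ j, s j = ∅
  · exact .inl (foundIn_singletonMatrix hempty fun j => by simpa [hsingle] using hins j)
  by_cases hcosingle : ∀ j, s j = {j}ᶜ
  · exact .inr (.inl (foundIn_cosingletonMatrix huniv fun j => hcosingle j ▸ hs j))
  refine .inr (.inr ?_)
  have of_singleton : ∀ i x, s i = {x} → FoundIn (monotoneMatrix 3) 𝓣 := fun i x hx => by
    have hxi : x ≠ i := fun h => hjs i (by simp [hx, h])
    refine foundIn_monotoneMatrix_of_chain hempty huniv hxi (hx ▸ hs i) ?_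
    simpa [hx, pair_comm] using hins i
  obtain ⟨k, hk⟩ := not_forall.mp hsingle
  obtain ⟨j, hj⟩ := not_forall.mp hcosingle
  rcases Fin.eq_empty_or_singleton_or_eq_compl (hjs k) with hk' | ⟨x, hx⟩ | hk'
  · exact absurd hk' hk
  · exact of_singleton k x hx
  rcases Fin.eq_empty_or_singleton_or_eq_compl (hjs j) with hj' | ⟨x, hx⟩ | hj'
  · have hjk : j ≠ k := by rintro rfl; exact hk hj'
    obtain ⟨l, hlj, hlk⟩ := Fin.exists_ne_and_ne j k
    refine foundIn_monotoneMatrix_of_chain hempty huniv hlj.symm ?_ ?_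
    · simpa [hj'] using hins j
    · rw [Fin.pair_eq_compl_singleton hlj.symm hjk hlk]
      exact hk' ▸ hs k
  · exact of_singleton j x hx
  · exact absurd hj' hj

end FinThree

/-- **Lemma.** If the `2 × 3` matrix with rows `000` and `111` can be found in a
reduced collection `𝓗`, then one of `S³`, `S̄³`, `M³` can be found in `𝓗`. -/
theorem reduced_000_111 {α : Type*} (𝓗 : Set (Set α)) (hred : Reduced 𝓗)
    (h : FoundIn (fun (i : Fin 2) (_ : Fin 3) => i = 1) 𝓗) :
    FoundIn (singletonMatrix 3) 𝓗 ∨ FoundIn (cosingletonMatrix 3) 𝓗 ∨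
    FoundIn (monotoneMatrix 3) 𝓗 := by
  obtain ⟨H, e, -, he, hH, he𝓗, hinc⟩ := h
  have hempty : ∅ ∈ preimage e '' 𝓗 := ⟨H 0, hH 0, by ext j; simp [hinc]⟩
  have huniv : univ ∈ preimage e '' 𝓗 := ⟨H 1, hH 1, by ext j; simp [hinc]⟩
  have hins := fun j => hred.exists_insert_mem_preimage_image he (he𝓗 j)
  exact (foundIn_fin_three_of_exists_insert_mem hempty huniv hins).imp
    (·.of_preimage_image he he𝓗) (.imp (·.of_preimage_image he he𝓗) (·.of_preimage_image he he𝓗))
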